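/- Let (R'',M'') be the sum of the two 4-player ranking problems: (R,M) where X_1–X_2, X_1–X_4, X_2–X_3, X_3–X_4 are drawn single matches, and (R',M') where X_3 beat X_1 and X_2, and X_4 drew with X_1 and X_2. If a scoring method f is self-consistent and satisfies f_3(R'',M'') > f_4(R'',M''), then f_2(R'',M'') > f_1(R'',M''). -/

import Mathlib

open Finset

/-- A ranking problem: skew-symmetric results matrix `R`, symmetric
nonnegative-integer matches matrix `M`, with `|R i j| ≤ M i j`. -/
structure RP (n : ℕ) where
  R : Fin n → Fin n → ℝ
  M : Fin n → Fin n → ℕ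
  skew : ∀ i j, R j i = - R i j
  symm : ∀ i j, M j i = M i j
  bound : ∀ i j, |R i j| ≤ (M i j : ℝ)

/-- Sum of two ranking problems. -/
def RP.add {n : ℕ} (P Q : RP n) : RP n where
  R i j := P.R i j + Q.R i j
  M i j := P.M i j + Q.M i j
  skew i j := by rw [P.skew i j, Q.skew i j]; ring
  symm i j := by rw [P.symm i j, Q.symm i j]
  bound i j := by
    calc |P.R i j + Q.R i j| ≤ |P.R i j| + |Q.R i j| := abs_add_le _ _
      _ ≤ (P.M i j : ℝ) + (Q.M i j : ℝ) := add_le_add (P.bound i j) (Q.bound i j)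
      _ = ((P.M i j + Q.M i j : ℕ) : ℝ) := by push_cast; ring

/-- The ranking problem with all results reversed. -/
def RP.neg {n : ℕ} (P : RP n) : RP n where
  R i j := - P.R i j
  M := P.M
  skew i j := by rw [P.skew i j]
  symm := P.symm
  bound i j := by simpa using P.bound i j

/-- Relabelling the players by a permutation. -/
def RP.relabel {n : ℕ} (σ : Equiv.Perm (Fin n)) (P : RP n) : RP n where
  R i j := P.R (σ.symm i) (σ.symm j)
  M i j := P.M (σ.symm i) (σ.symm j)
  skew i j := P.skew _ _
  symm i j := P.symm _ _
  bound i j := P.bound _ _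

/-- All players have played `m` matches. -/
def RPBalanced {n : ℕ} (P : RP n) (m : ℕ) : Prop := ∀ i, ∑ j, P.M i j = m

/-- Symmetry (SYM): if all results are draws, all scores are equal. -/
def SYM {n : ℕ} (f : RP n → Fin n → ℝ) : Prop :=
  ∀ P : RP n, (∀ i j, P.R i j = 0) → ∀ i j, f P i = f P j

/-- Inversion (INV). -/
def INV {n : ℕ} (f : RP n → Fin n → ℝ) : Prop :=
  ∀ P : RP n, ∀ i j, f P i ≥ f P j ↔ f P.neg i ≤ f P.neg j

/-- Order preservation (OP). -/
def OP {n : ℕ} (f : RP n → Fin n → ℝ) : Prop :=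
  ∀ P Q : RP n, ∀ m m' : ℕ, RPBalanced P m → RPBalanced Q m' →
    ∀ i j, f P i ≥ f P j → f Q i ≥ f Q j →
      f (P.add Q) i ≥ f (P.add Q) j ∧
      ((f P i > f P j ∨ f Q i > f Q j) → f (P.add Q) i > f (P.add Q) j)

/-- Strong order preservation (SOP). -/
def SOP {n : ℕ} (f : RP n → Fin n → ℝ) : Prop :=
  ∀ P Q : RP n, ∀ i j, f P i ≥ f P j → f Q i ≥ f Q j →
      f (P.add Q) i ≥ f (P.add Q) j ∧
      ((f P i > f P j ∨ f Q i > f Q j) → f (P.add Q) i > f (P.add Q) j)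

/-- Neutrality (NEU). -/
def NEU {n : ℕ} (f : RP n → Fin n → ℝ) : Prop :=
  ∀ σ : Equiv.Perm (Fin n), ∀ P : RP n, ∀ i, f P i = f (P.relabel σ) (σ i)

/-- Independence of irrelevant matches (IIM). -/
def IIM {n : ℕ} (f : RP n → Fin n → ℝ) : Prop :=
  ∀ P Q : RP n, ∀ i j k l : Fin n,
    i ≠ k → i ≠ l → j ≠ k → j ≠ l → i ≠ j → k ≠ l →
    (∀ a b, ¬((a = k ∧ b = l) ∨ (a = l ∧ b = k)) → P.R a b = Q.R a b ∧ P.M a b = Q.M a b) →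
    f P i ≥ f P j → f Q i ≥ f Q j

/-- A decomposition of a ranking problem into per-match results:
match `t` between `a` and `b` (for `t < M a b`) has result `res a b t ∈ [-1,1]`,
and the results sum to `R a b`. -/
structure RP.Decomp {n : ℕ} (P : RP n) where
  res : Fin n → Fin n → ℕ → ℝ
  skew : ∀ a b t, res b a t = - res a b t
  bound : ∀ a b t, t < P.M a b → |res a b t| ≤ 1
  sum : ∀ a b, ∑ t ∈ Finset.range (P.M a b), res a b t = P.R a b

/-- The opponent multiset of player `i`: `M i k` copies of each `k`. -/
def RP.Matches {n : ℕ} (P : RP n) (i : Fin n) := Σ k : Fin n, Fin (P.M i k)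

/-- Self-consistency (SC): if there is a bijection between the opponent
multisets of `i` and `j` matching each match of `i` to a match of `j` with a
weakly smaller per-match result against a weakly weaker opponent, then
`f i ≥ f j`, strictly if some comparison is strict. -/
def SC {n : ℕ} (f : RP n → Fin n → ℝ) : Prop :=
  ∀ P : RP n, ∀ d : P.Decomp, ∀ i j : Fin n, ∀ e : P.Matches i ≃ P.Matches j,
    (∀ m : P.Matches i,
      d.res i m.1 m.2.1 ≥ d.res j (e m).1 (e m).2.1 ∧ f P m.1 ≥ f P (e m).1) →
    f P i ≥ f P j ∧
    ((∃ m : P.Matches i,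
        d.res i m.1 m.2.1 > d.res j (e m).1 (e m).2.1 ∨ f P m.1 > f P (e m).1) →
      f P i > f P j)


/-- The sum of the drawn 4-cycle and the second-round tournament:
`r''₁₃ = r''₂₃ = -1`, all other aggregated results zero;
`m''₁₂ = m''₁₃ = m''₂₄ = m''₃₄ = 1`, `m''₁₄ = m''₂₃ = 2`. -/
def P12 : RP 4 where
  R := fun i j => ![![0,0,-1,0],![0,0,-1,0],![1,1,0,0],![0,0,0,0]] i j
  M := fun i j => ![![0,1,1,2],![1,0,2,1],![1,2,0,1],![2,1,1,0]] i j
  skew := by intro i j; fin_cases i <;> fin_cases j <;> norm_num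
  symm := by decide
  bound := by intro i j; fin_cases i <;> fin_cases j <;> norm_num

/-!
With player `i : Fin 4` standing for `Xᵢ₊₁`: split each aggregated result of `P12` into single
matches, so that `X₂` lost one and drew one of its two matches against `X₃`. Pairing `X₂`'s matches against `X₁, X₃, X₃, X₄` with `X₁`'s against
`X₂, X₃, X₄, X₄` pairs equal results. If `f₂ ≤ f₁`, every opponent of `X₂` is then at least as strong
as its partner, strictly so for `X₃` against `X₄`, and self-consistency yields `f₂ > f₁`.
-/

instance {n : ℕ} (P : RP n) (i : Fin n) : Fintype (P.Matches i) :=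
  inferInstanceAs (Fintype (Σ k : Fin n, Fin (P.M i k)))

instance {n : ℕ} (P : RP n) (i : Fin n) : DecidableEq (P.Matches i) :=
  inferInstanceAs (DecidableEq (Σ k : Fin n, Fin (P.M i k)))

/-- An integer result `r` is played as `|r|` decisive matches (each worth `r / |r| = ±1`)
followed by draws. -/
noncomputable def RP.intDecomp {n : ℕ} (P : RP n) (hR : ∀ a b, ∃ z : ℤ, P.R a b = z) :
    P.Decomp where
  res a b t := if (t : ℝ) < |P.R a b| then P.R a b / |P.R a b| else 0
  skew a b t := by
    rw [P.skew, abs_neg, neg_div]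
    split_ifs <;> simp
  bound a b t _ := by
    split_ifs with ht
    · have : P.R a b ≠ 0 := abs_pos.mp ((Nat.cast_nonneg t).trans_lt ht)
      rw [abs_div, abs_abs, div_self (abs_ne_zero.mpr this)]
    · simp
  sum a b := by
    obtain ⟨z, hz⟩ := hR a b
    have habs : |P.R a b| = z.natAbs := by rw [hz, Nat.cast_natAbs, Int.cast_abs]
    have hle : z.natAbs ≤ P.M a b := by exact_mod_cast habs ▸ P.bound a b
    obtain ⟨k, hk⟩ := Nat.exists_eq_add_of_le hle
    rw [hk, sum_range_add, habs]
    simp only [Nat.cast_add, add_lt_iff_neg_left]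
    rw [sum_ite_of_true fun t ht ↦ by exact_mod_cast mem_range.mp ht,
      sum_ite_of_false fun t _ ↦ (Nat.cast_nonneg t).not_gt, sum_const_zero, add_zero,
      sum_const, card_range, nsmul_eq_mul, ← habs]
    rcases eq_or_ne (P.R a b) 0 with h | h
    · simp [h]
    · exact mul_div_cancel₀ _ (abs_ne_zero.mpr h)

theorem SC.lt_of_le_imp_matching {n : ℕ} {f : RP n → Fin n → ℝ} (hSC : SC f) {P : RP n}
    (d : P.Decomp) {i j : Fin n} (e : P.Matches i ≃ P.Matches j)
    (hmatch : f P i ≤ f P j → ∀ m : P.Matches i,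
      d.res i m.1 m.2.1 ≥ d.res j (e m).1 (e m).2.1 ∧ f P m.1 ≥ f P (e m).1)
    (hstrict : ∃ m : P.Matches i,
      d.res i m.1 m.2.1 > d.res j (e m).1 (e m).2.1 ∨ f P m.1 > f P (e m).1) :
    f P j < f P i := by
  by_contra hle
  push Not at hle
  exact ((hSC P d i j e (hmatch hle)).2 hstrict).not_ge hle

theorem P12.R_int (a b : Fin 4) : ∃ z : ℤ, P12.R a b = z := by
  fin_cases a <;> fin_cases b <;> simp [P12] <;>
    first
      | exact ⟨0, Int.cast_zero.symm⟩
      | exact ⟨1, Int.cast_one.symm⟩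
      | exact ⟨-1, by simp⟩

def P12.matchesEquiv : P12.Matches 1 ≃ P12.Matches 0 where
  toFun
    | ⟨0, _⟩ => ⟨1, ⟨0, by decide⟩⟩
    | ⟨2, ⟨0, _⟩⟩ => ⟨2, ⟨0, by decide⟩⟩
    | ⟨2, ⟨_ + 1, _⟩⟩ => ⟨3, ⟨0, by decide⟩⟩
    | ⟨3, _⟩ => ⟨3, ⟨1, by decide⟩⟩
  invFun
    | ⟨1, _⟩ => ⟨0, ⟨0, by decide⟩⟩
    | ⟨2, _⟩ => ⟨2, ⟨0, by decide⟩⟩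
    | ⟨3, ⟨0, _⟩⟩ => ⟨2, ⟨1, by decide⟩⟩
    | ⟨3, ⟨_ + 1, _⟩⟩ => ⟨3, ⟨0, by decide⟩⟩
  left_inv := by decide
  right_inv := by decide

theorem P12.matchesEquiv_opponent (m : P12.Matches 1) :
    (P12.matchesEquiv m).1 = m.1 ∨ (m.1 = 0 ∧ (P12.matchesEquiv m).1 = 1) ∨
      (m.1 = 2 ∧ (P12.matchesEquiv m).1 = 3) := by
  revert m
  decide

theorem P12.intDecomp_res_matchesEquiv (m : P12.Matches 1) :
    (P12.intDecomp P12.R_int).res 1 m.1 m.2 =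
      (P12.intDecomp P12.R_int).res 0 (P12.matchesEquiv m).1 (P12.matchesEquiv m).2 := by
  obtain ⟨k, t⟩ := m
  fin_cases k <;> fin_cases t <;> simp only [P12.matchesEquiv, Equiv.coe_fn_mk] <;>
    simp [RP.intDecomp, P12]

theorem sc_on_sum (f : RP 4 → Fin 4 → ℝ) (hSC : SC f)
    (h34 : f P12 2 > f P12 3) : f P12 1 > f P12 0 := by
  refine hSC.lt_of_le_imp_matching (P12.intDecomp P12.R_int) P12.matchesEquiv
    (fun h10 m ↦ ⟨(P12.intDecomp_res_matchesEquiv m).ge, ?_⟩) ⟨⟨2, ⟨1, by decide⟩⟩, Or.inr h34⟩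
  rcases P12.matchesEquiv_opponent m with h | ⟨h, h'⟩ | ⟨h, h'⟩
  · rw [h]
  · rw [h, h']
    exact h10
  · rw [h, h']
    exact h34.le
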